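/- arXiv:1408.0937 — 5 statements merged into one kernel-verified Lean document; each statement's English description precedes it below -/
import Mathlib

section
/- If q ≡ 1 (mod 4) and f, g are monic polynomials in F_q[t] with g squarefree and coprime to f, then the quadratic residue symbol satisfies reciprocity: (f/g) = (g/f). -/
open scoped Classical

/-- The quadratic residue (Legendre) symbol `(f/p)` for `p` a prime (irreducible) polynomial:
`0` if `p ∣ f`, `1` if `f` is a nonzero square mod `p`, and `-1` otherwise. -/
noncomputable def legendrePoly {F : Type} [Field F] (f p : Polynomial F) : ℤ :=
  if p ∣ f then 0 else if ∃ h : Polynomial F, p ∣ (h ^ 2 - f) then 1 else -1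

/-- The quadratic residue symbol `(f/g)`, extended multiplicatively in `g` over the
prime factorization of `g`. -/
noncomputable def resSym {F : Type} [Field F] (f g : Polynomial F) : ℤ :=
  ((UniqueFactorizationMonoid.normalizedFactors g).map (fun p => legendrePoly f p)).prod

/-!
For a monic irreducible `ℓ`, Euler's criterion in the residue field `F[t]/ℓ` and the formula
`N(x) = x ^ ((q ^ deg ℓ - 1) / (q - 1))` for its norm down to `F` give
`(f/ℓ) = χ(N(f mod ℓ)) = χ(Res(ℓ, f))`, where `χ` is the quadratic character of `F`.
Multiplicativity of the resultant then yields `(f/g) = χ(Res(g, f))` for every monic `g`, and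
`Res(g, f) = (-1) ^ (deg f * deg g) * Res(f, g)`, where `χ(-1) = 1` because `q ≡ 1 mod 4`.
-/

open Polynomial UniqueFactorizationMonoid

lemma Nat.pow_sub_one_div_sub_one_mul_half {q : ℕ} (hq : q % 2 = 1) (d : ℕ) :
    (q ^ d - 1) / (q - 1) * (q / 2) = q ^ d / 2 := by
  have hpos := Nat.one_le_pow d q (by omega)
  obtain ⟨k, hk⟩ := q.sub_one_dvd_pow_sub_one d
  rcases Nat.eq_zero_or_pos (q / 2) with hq1 | hq1
  · have : q = 1 := by omega
    simp [this]
  rw [hk, Nat.mul_div_cancel_left k (by omega)]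
  rw [show q - 1 = 2 * (q / 2) by omega, mul_assoc] at hk
  rw [mul_comm]
  omega

lemma Polynomial.resultant_multiset_prod_left {R : Type*} [CommRing R] (s : Multiset R[X])
    (hs : ∀ p ∈ s, p.Monic) (g : R[X]) (n : ℕ) (hn : g.natDegree ≤ n) :
    resultant s.prod g s.prod.natDegree n = (s.map fun p => resultant p g p.natDegree n).prod := by
  induction s using Multiset.induction_on with
  | empty => simp
  | cons p s ih =>
    have hp : p.Monic := hs p (Multiset.mem_cons_self p s)
    have hs' : ∀ q ∈ s, q.Monic := fun q hq => hs q (Multiset.mem_cons_of_mem hq)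
    have hsm : s.prod.Monic := by simpa using monic_multiset_prod_of_monic s id hs'
    rw [Multiset.prod_cons, hp.natDegree_mul hsm, resultant_mul_left _ _ _ _ hn, ih hs',
      Multiset.map_cons, Multiset.prod_cons]

lemma AdjoinRoot.norm_mk_eq_resultant {F : Type*} [Field F] [PerfectField F] {p : F[X]}
    (hp : Irreducible p) (hpm : p.Monic) (f : F[X]) :
    Algebra.norm F (AdjoinRoot.mk p f) = resultant p f := by
  set Ω := AlgebraicClosure F
  have : Fact (Irreducible p) := ⟨hp⟩
  have : Module.Finite F (AdjoinRoot p) := (AdjoinRoot.powerBasis hp.ne_zero).finite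
  have hnodup : (p.aroots Ω).Nodup := nodup_roots (PerfectField.separable_of_irreducible hp).map
  apply (algebraMap F Ω).injective
  rw [← resultant_map_map, ← natDegree_map (algebraMap F Ω) (p := p),
    resultant_eq_prod_eval _ _ _ natDegree_map_le (IsAlgClosed.splits _),
    (hpm.map _).leadingCoeff, one_pow, one_mul, ← AdjoinRoot.aeval_eq,
    Algebra.norm_eq_prod_embeddings]
  have hσ (σ : AdjoinRoot p →ₐ[F] Ω) :
      σ (aeval (AdjoinRoot.root p) f) = (f.map (algebraMap F Ω)).eval (σ (AdjoinRoot.root p)) := by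
    rw [← aeval_algHom_apply, aeval_def, eval_map]
  simp_rw [hσ]
  -- the embeddings `F[t]/p → Ω` correspond to the (simple) roots of `p` in `Ω`
  rw [Fintype.prod_equiv (AdjoinRoot.equiv Ω F p hp.ne_zero)
      (fun σ => (f.map (algebraMap F Ω)).eval (σ (AdjoinRoot.root p)))
      (fun r => (f.map (algebraMap F Ω)).eval (r : Ω)) (fun _ => rfl),
    Finset.prod_mem_multiset _ _ (fun r => (f.map (algebraMap F Ω)).eval r) (fun _ => rfl),
    Finset.prod_eq_multiset_prod, Multiset.toFinset_val, hnodup.dedup, aroots_def]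

lemma legendrePoly_eq_quadraticChar {F : Type} [Field F] {p : F[X]} [Fact (Irreducible p)]
    [Fintype (AdjoinRoot p)] (f : F[X]) :
    legendrePoly f p = quadraticChar (AdjoinRoot p) (AdjoinRoot.mk p f) := by
  have hsq : (∃ h : F[X], p ∣ h ^ 2 - f) ↔ IsSquare (AdjoinRoot.mk p f) := by
    simp_rw [← AdjoinRoot.mk_eq_zero, map_sub, map_pow, sub_eq_zero]
    constructor
    · rintro ⟨h, hh⟩
      exact ⟨AdjoinRoot.mk p h, by rw [← hh, sq]⟩
    · rintro ⟨y, hy⟩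
      obtain ⟨h, rfl⟩ := AdjoinRoot.mk_surjective y
      exact ⟨h, by rw [hy, sq]⟩
  simp only [legendrePoly, quadraticChar_apply, quadraticCharFun, AdjoinRoot.mk_eq_zero, hsq]

lemma quadraticChar_norm {F K : Type*} [Field F] [Fintype F] [Field K] [Fintype K]
    [Algebra F K] (hF : ringChar F ≠ 2) (x : K) :
    quadraticChar F (Algebra.norm F x) = quadraticChar K x := by
  have hK : ringChar K ≠ 2 := by rwa [← Algebra.ringChar_eq F K]
  obtain ⟨d, hd⟩ : ∃ d, Fintype.card K = Fintype.card F ^ d := ⟨_, Module.card_eq_pow_finrank⟩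
  apply Int.cast_injOn_of_ringChar_ne_two hK (by simpa using quadraticChar_isQuadratic F _)
    (by simpa using quadraticChar_isQuadratic K x)
  rw [quadraticChar_eq_pow_of_char_ne_two' hK, ← map_intCast (algebraMap F K),
    quadraticChar_eq_pow_of_char_ne_two' hF, map_pow, FiniteField.algebraMap_norm_eq_pow,
    ← pow_mul, Nat.card_eq_fintype_card, Nat.card_eq_fintype_card, hd,
    Nat.pow_sub_one_div_sub_one_mul_half (FiniteField.odd_card_of_char_ne_two hF)]

lemma legendrePoly_eq_quadraticChar_resultant {F : Type} [Field F] [Fintype F]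
    (hF : ringChar F ≠ 2) {p : F[X]} (hp : Irreducible p) (hpm : p.Monic) (f : F[X]) :
    legendrePoly f p = quadraticChar F (resultant p f) := by
  have : Fact (Irreducible p) := ⟨hp⟩
  have : Module.Finite F (AdjoinRoot p) := (AdjoinRoot.powerBasis hp.ne_zero).finite
  let : Fintype (AdjoinRoot p) := @Fintype.ofFinite _ (Module.finite_of_finite F)
  rw [legendrePoly_eq_quadraticChar, ← quadraticChar_norm hF,
    AdjoinRoot.norm_mk_eq_resultant hp hpm]

lemma resSym_eq_quadraticChar_resultant {F : Type} [Field F] [Fintype F] (hF : ringChar F ≠ 2)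
    (f : F[X]) {g : F[X]} (hg : g.Monic) :
    resSym f g = quadraticChar F (resultant g f) := by
  have hfac (p) (hp : p ∈ normalizedFactors g) : Irreducible p ∧ p.Monic :=
    ((Polynomial.mem_normalizedFactors_iff hg.ne_zero).mp hp).imp_right And.left
  have hprod : (normalizedFactors g).prod = g := by
    rw [prod_normalizedFactors_eq hg.ne_zero, hg.normalize_eq_self]
  conv_rhs => rw [← hprod]
  rw [resultant_multiset_prod_left _ (fun p hp => (hfac p hp).2) _ _ le_rfl,
    map_multiset_prod, Multiset.map_map, resSym]
  exact congrArg _ (Multiset.map_congr rfl fun p hp =>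
    legendrePoly_eq_quadraticChar_resultant hF (hfac p hp).1 (hfac p hp).2 f)

theorem stmt_3_general (F : Type) [Field F] [Fintype F] (hq : Fintype.card F % 4 = 1)
    (f g : Polynomial F) (hf : f.Monic) (hg : g.Monic) :
    resSym f g = resSym g f := by
  have hF : ringChar F ≠ 2 := fun h => by
    have := FiniteField.even_card_iff_char_two.mp h
    omega
  rw [resSym_eq_quadraticChar_resultant hF f hg, resSym_eq_quadraticChar_resultant hF g hf,
    resultant_comm, map_mul, map_pow, quadraticChar_neg_one hF, ZMod.χ₄_nat_one_mod_four hq,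
    one_pow, one_mul]

/-- Quadratic reciprocity in `F_q[t]` for `q ≡ 1 mod 4`: for `f, g` monic with `g`
squarefree and coprime to `f`, `(f/g) = (g/f)`. -/
theorem stmt_3 (F : Type) [Field F] [Fintype F] (hq : Fintype.card F % 4 = 1)
    (f g : Polynomial F) (hf : f.Monic) (hg : g.Monic) (hsq : Squarefree g)
    (hco : IsCoprime f g) :
    resSym f g = resSym g f :=
  stmt_3_general F hq f g hf hg
end

section
/- Suppose a family of complex coefficients c(a_0,...,a_n) indexed by (n+1)-tuples of nonnegative integers (indices mod n+1) satisfies, for every i and all indices: if a_{i-1} + a_{i+1} is odd then c(..., a_i, ...) = q^{a_i - (a_{i-1}+a_{i+1}-1)/2} c(..., a_{i-1}+a_{i+1}-1-a_i, ...), and if a_{i-1}+a_{i+1} is even then c(..., a_i, ...) = q·c(..., a_i - 1, ...) + q^{a_i - (a_{i-1}+a_{i+1})/2} (c(..., a_{i-1}+a_{i+1}-a_i, ...) - q·c(..., a_{i-1}+a_{i+1}-a_i-1, ...)) whenever a_i ≥ 1. Then c is uniquely determined by its diagonal values c(a, a, ..., a): if two such families agree on the diagonal, they are equal. -/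
/-!
Induct on the total degree `∑ j, a j`. A non-constant cyclic tuple has a position `i` with
`a (i - 1) + a (i + 1) < 2 * a i` (a maximum next to a smaller entry). At such an `i` both
recurrences express `c a` through coefficients in which only `a i` has been lowered, so two
solutions agreeing below `a` agree at `a`; constant tuples are covered by the diagonal.
-/

open Function

lemma ZMod.induction_add_one {N : ℕ} [NeZero N] {p : ZMod N → Prop} (i : ZMod N) (hi : p i)
    (hstep : ∀ x, p x → p (x + 1)) (x : ZMod N) : p x := by
  obtain ⟨k, hk⟩ := ZMod.natCast_zmod_surjective (x - i)
  rw [show x = i + k by rw [hk]; ring]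
  clear hk
  induction k with
  | zero => simpa using hi
  | succ k ih => simpa [add_assoc] using hstep _ ih

lemma exists_add_lt_two_mul_of_not_const {N : ℕ} [NeZero N] (a : ZMod N → ℤ)
    (h : ¬ ∀ j, a j = a 0) : ∃ i, a (i - 1) + a (i + 1) < 2 * a i := by
  obtain ⟨i₀, hmax⟩ := Finite.exists_max a
  by_contra! hconv
  have hall : ∀ x, a x = a i₀ :=
    ZMod.induction_add_one i₀ rfl fun x hx => by
      have := hconv x; have := hmax (x - 1); have := hmax (x + 1); omega
  exact h fun j => by rw [hall j, hall 0]

lemma sum_toNat_update_lt {ι : Type*} [Fintype ι] [DecidableEq ι] (a : ι → ℤ) {i : ι} {b : ℤ}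
    (hb : 0 ≤ b) (hlt : b < a i) :
    ∑ j, (update a i b j).toNat < ∑ j, (a j).toNat := by
  refine Finset.sum_lt_sum (fun j _ => ?_)
    ⟨i, Finset.mem_univ i, by simp only [update_self]; omega⟩
  rcases eq_or_ne j i with rfl | hj
  · simp only [update_self]; omega
  · simp [update_of_ne hj]

lemma eq_of_forall_update_lt {ι β : Type*} [Fintype ι] [DecidableEq ι] {f g : (ι → ℤ) → β}
    (hneg : ∀ a, (∃ j, a j < 0) → f a = g a)
    (hstep : ∀ a, (∀ j, 0 ≤ a j) →
      (∀ i, ∀ b < a i, f (update a i b) = g (update a i b)) → f a = g a) :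
    f = g := by
  funext a
  induction hm : ∑ j, (a j).toNat using Nat.strong_induction_on generalizing a with
  | _ m ih =>
    by_cases ha : ∃ j, a j < 0
    · exact hneg a ha
    push Not at ha
    refine hstep a ha fun i b hb => ?_
    by_cases hb₀ : b < 0
    · exact hneg _ ⟨i, by simpa using hb₀⟩
    exact ih _ (hm ▸ sum_toNat_update_lt a (not_lt.mp hb₀) hb) _ rfl

theorem stmt_9_general (n : ℕ) (q : ℂ)
    (c c' : (ZMod (n + 1) → ℤ) → ℂ)
    (hneg : ∀ a : ZMod (n + 1) → ℤ, (∃ j, a j < 0) → c a = 0)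
    (hneg' : ∀ a : ZMod (n + 1) → ℤ, (∃ j, a j < 0) → c' a = 0)
    (hodd : ∀ a : ZMod (n + 1) → ℤ, (∀ j, 0 ≤ a j) → ∀ i, Odd (a (i - 1) + a (i + 1)) →
      c a = q ^ (a i - (a (i - 1) + a (i + 1) - 1) / 2) *
        c (Function.update a i (a (i - 1) + a (i + 1) - 1 - a i)))
    (hodd' : ∀ a : ZMod (n + 1) → ℤ, (∀ j, 0 ≤ a j) → ∀ i, Odd (a (i - 1) + a (i + 1)) →
      c' a = q ^ (a i - (a (i - 1) + a (i + 1) - 1) / 2) *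
        c' (Function.update a i (a (i - 1) + a (i + 1) - 1 - a i)))
    (heven : ∀ a : ZMod (n + 1) → ℤ, (∀ j, 0 ≤ a j) → ∀ i, Even (a (i - 1) + a (i + 1)) →
      1 ≤ a i →
      c a = q * c (Function.update a i (a i - 1)) +
        q ^ (a i - (a (i - 1) + a (i + 1)) / 2) *
          (c (Function.update a i (a (i - 1) + a (i + 1) - a i)) -
            q * c (Function.update a i (a (i - 1) + a (i + 1) - a i - 1))))
    (heven' : ∀ a : ZMod (n + 1) → ℤ, (∀ j, 0 ≤ a j) → ∀ i, Even (a (i - 1) + a (i + 1)) →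
      1 ≤ a i →
      c' a = q * c' (Function.update a i (a i - 1)) +
        q ^ (a i - (a (i - 1) + a (i + 1)) / 2) *
          (c' (Function.update a i (a (i - 1) + a (i + 1) - a i)) -
            q * c' (Function.update a i (a (i - 1) + a (i + 1) - a i - 1))))
    (hdiag : ∀ m : ℤ, c (fun _ => m) = c' (fun _ => m)) :
    c = c' := by
  refine eq_of_forall_update_lt (fun a ha => by rw [hneg a ha, hneg' a ha]) fun a ha hlt => ?_
  by_cases hconst : ∀ j, a j = a 0
  · rw [show a = fun _ => a 0 from funext hconst]
    exact hdiag _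
  obtain ⟨i, hi⟩ := exists_add_lt_two_mul_of_not_const a hconst
  have hl := ha (i - 1)
  have hr := ha (i + 1)
  rcases Int.even_or_odd (a (i - 1) + a (i + 1)) with hev | hod
  · have hai : 1 ≤ a i := by omega
    rw [heven a ha i hev hai, heven' a ha i hev hai, hlt i (a i - 1) (by omega),
      hlt i (a (i - 1) + a (i + 1) - a i) (by omega),
      hlt i (a (i - 1) + a (i + 1) - a i - 1) (by omega)]
  · rw [hodd a ha i hod, hodd' a ha i hod, hlt i (a (i - 1) + a (i + 1) - 1 - a i) (by omega)]

/-- Coefficient families satisfying the `σ_i` recurrences (for the `Ã_n` functional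
equations) are uniquely determined by their diagonal values. Coefficients are indexed by
`(n+1)`-tuples of integers (indices mod `n+1`), with coefficients having a negative entry
interpreted as `0`. -/
theorem stmt_9 (n : ℕ) (hn : 2 ≤ n) (q : ℂ) (hq : q ≠ 0)
    (c c' : (ZMod (n + 1) → ℤ) → ℂ)
    (hneg : ∀ a : ZMod (n + 1) → ℤ, (∃ j, a j < 0) → c a = 0)
    (hneg' : ∀ a : ZMod (n + 1) → ℤ, (∃ j, a j < 0) → c' a = 0)
    (hodd : ∀ a : ZMod (n + 1) → ℤ, (∀ j, 0 ≤ a j) → ∀ i, Odd (a (i - 1) + a (i + 1)) →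
      c a = q ^ (a i - (a (i - 1) + a (i + 1) - 1) / 2) *
        c (Function.update a i (a (i - 1) + a (i + 1) - 1 - a i)))
    (hodd' : ∀ a : ZMod (n + 1) → ℤ, (∀ j, 0 ≤ a j) → ∀ i, Odd (a (i - 1) + a (i + 1)) →
      c' a = q ^ (a i - (a (i - 1) + a (i + 1) - 1) / 2) *
        c' (Function.update a i (a (i - 1) + a (i + 1) - 1 - a i)))
    (heven : ∀ a : ZMod (n + 1) → ℤ, (∀ j, 0 ≤ a j) → ∀ i, Even (a (i - 1) + a (i + 1)) →
      1 ≤ a i →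
      c a = q * c (Function.update a i (a i - 1)) +
        q ^ (a i - (a (i - 1) + a (i + 1)) / 2) *
          (c (Function.update a i (a (i - 1) + a (i + 1) - a i)) -
            q * c (Function.update a i (a (i - 1) + a (i + 1) - a i - 1))))
    (heven' : ∀ a : ZMod (n + 1) → ℤ, (∀ j, 0 ≤ a j) → ∀ i, Even (a (i - 1) + a (i + 1)) →
      1 ≤ a i →
      c' a = q * c' (Function.update a i (a i - 1)) +
        q ^ (a i - (a (i - 1) + a (i + 1)) / 2) *
          (c' (Function.update a i (a (i - 1) + a (i + 1) - a i)) -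
            q * c' (Function.update a i (a (i - 1) + a (i + 1) - a i - 1))))
    (hdiag : ∀ m : ℤ, c (fun _ => m) = c' (fun _ => m)) :
    c = c' :=
  stmt_9_general n q c c' hneg hneg' hodd hodd' heven heven' hdiag
end

section
/- Consider the formal power series identity defining the cocycle: (1/16) Σ_{ε_1,ε_2,ε_3 ∈ {±1}} ε_2 ε_3 q² x^(-4) (ε_1ε_2ε_3 q^(-1/2) - (1 - ε_2ε_3 q^(-1) x)/(1 - ε_2ε_3 x)) (ε_3 q^(-1/2) - (1 - ε_1 q^(-1/2) x)/(1 - ε_1 q^(1/2) x)) (ε_2 q^(-1/2) - (1 - ε_1 q^(-1/2) x)/(1 - ε_1 q^(1/2) x)) (ε_1 q^(-1/2) - (1 - x)/(1 - q x)) = (1 - x^(-2))(1 - q x^(-2)) / ((1 - x²)(1 - q x²)), as an identity of rational functions in x and q^(1/2). -/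
open scoped Classical

/-- The field `ℚ(x, s)` of rational functions in two indeterminates, with `s = q^{1/2}`. -/
noncomputable abbrev RF := FractionRing (MvPolynomial (Fin 2) ℚ)

noncomputable def rfX : RF := algebraMap (MvPolynomial (Fin 2) ℚ) RF (MvPolynomial.X 0)

noncomputable def rfS : RF := algebraMap (MvPolynomial (Fin 2) ℚ) RF (MvPolynomial.X 1)

/-! Once the sum over the signs is written out, the identity holds in any field of characteristic
other than `2` as soon as none of the denominators `x`, `s`, `1 ± x`, `1 ± s x`, `1 - s² x`
vanishes; clearing them leaves a polynomial identity. In `ℚ(x, s)` these denominators are nonzero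
because the corresponding polynomials do not vanish at `(x, s) = (1/2, 1/3)`. -/

theorem cocycle_sum_eq {K : Type*} [Field K] [DecidableEq K] (h2 : (2 : K) ≠ 0) (x s : K)
    (hx : x ≠ 0) (hs : s ≠ 0) (hx2 : 1 - x ^ 2 ≠ 0) (hsx2 : 1 - s ^ 2 * x ^ 2 ≠ 0)
    (hs2x : 1 - s ^ 2 * x ≠ 0) :
    (1 / 16 : K) *
      ∑ e₁ ∈ ({1, -1} : Finset K), ∑ e₂ ∈ ({1, -1} : Finset K),
        ∑ e₃ ∈ ({1, -1} : Finset K),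
          e₂ * e₃ * s ^ 4 * (x⁻¹) ^ 4 *
            (e₁ * e₂ * e₃ * s⁻¹ - (1 - e₂ * e₃ * (s ^ 2)⁻¹ * x) / (1 - e₂ * e₃ * x)) *
            (e₃ * s⁻¹ - (1 - e₁ * s⁻¹ * x) / (1 - e₁ * s * x)) *
            (e₂ * s⁻¹ - (1 - e₁ * s⁻¹ * x) / (1 - e₁ * s * x)) *
            (e₁ * s⁻¹ - (1 - x) / (1 - s ^ 2 * x))
      = (1 - (x⁻¹) ^ 2) * (1 - s ^ 2 * (x⁻¹) ^ 2) / ((1 - x ^ 2) * (1 - s ^ 2 * x ^ 2)) := by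
  have h16 : (16 : K) ≠ 0 := by
    simpa [show (2 : K) ^ 4 = 16 by norm_num] using pow_ne_zero 4 h2
  have hsign : (1 : K) ≠ -1 := fun h => h2 (by linear_combination h)
  have hx_sub : 1 - x ≠ 0 := fun h => hx2 (by linear_combination (1 + x) * h)
  have hx_add : 1 + x ≠ 0 := fun h => hx2 (by linear_combination (1 - x) * h)
  have hsx_sub : 1 - s * x ≠ 0 := fun h => hsx2 (by linear_combination (1 + s * x) * h)
  have hsx_add : 1 + s * x ≠ 0 := fun h => hsx2 (by linear_combination (1 - s * x) * h)
  simp only [Finset.sum_pair hsign]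
  simp only [one_mul, mul_one, neg_mul, mul_neg, neg_neg, sub_neg_eq_add]
  field_simp
  ring

theorem MvPolynomial.algebraMap_fractionRing_ne_zero {σ R : Type*} [CommRing R] [IsDomain R]
    {p : MvPolynomial σ R} (v : σ → R) (hp : eval v p ≠ 0) :
    algebraMap (MvPolynomial σ R) (FractionRing (MvPolynomial σ R)) p ≠ 0 := by
  rw [Ne, IsFractionRing.to_map_eq_zero_iff]
  rintro rfl
  exact hp (map_zero _)

/-- The scalar cocycle computation: with `x = rfX` and `q^{1/2} = s = rfS` (so `q = s²`),
`(1/16) Σ_{ε₁,ε₂,ε₃ = ±1} ε₂ε₃ q² x⁻⁴ (ε₁ε₂ε₃ q^{-1/2} - (1 - ε₂ε₃ q^{-1} x)/(1 - ε₂ε₃ x))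
(ε₃ q^{-1/2} - (1 - ε₁ q^{-1/2} x)/(1 - ε₁ q^{1/2} x))
(ε₂ q^{-1/2} - (1 - ε₁ q^{-1/2} x)/(1 - ε₁ q^{1/2} x))
(ε₁ q^{-1/2} - (1 - x)/(1 - q x))
= (1 - x⁻²)(1 - q x⁻²)/((1 - x²)(1 - q x²))` as rational functions. -/
theorem stmt_14 :
    (1 / 16 : RF) *
      ∑ e₁ ∈ ({1, -1} : Finset RF), ∑ e₂ ∈ ({1, -1} : Finset RF),
        ∑ e₃ ∈ ({1, -1} : Finset RF),
          e₂ * e₃ * rfS ^ 4 * (rfX⁻¹) ^ 4 *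
            (e₁ * e₂ * e₃ * rfS⁻¹ -
              (1 - e₂ * e₃ * (rfS ^ 2)⁻¹ * rfX) / (1 - e₂ * e₃ * rfX)) *
            (e₃ * rfS⁻¹ - (1 - e₁ * rfS⁻¹ * rfX) / (1 - e₁ * rfS * rfX)) *
            (e₂ * rfS⁻¹ - (1 - e₁ * rfS⁻¹ * rfX) / (1 - e₁ * rfS * rfX)) *
            (e₁ * rfS⁻¹ - (1 - rfX) / (1 - rfS ^ 2 * rfX))
      = (1 - (rfX⁻¹) ^ 2) * (1 - rfS ^ 2 * (rfX⁻¹) ^ 2) /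
          ((1 - rfX ^ 2) * (1 - rfS ^ 2 * rfX ^ 2)) := by
  have ne_zero (p : MvPolynomial (Fin 2) ℚ) (hp : MvPolynomial.eval ![1 / 2, 1 / 3] p ≠ 0) :
      algebraMap (MvPolynomial (Fin 2) ℚ) RF p ≠ 0 :=
    MvPolynomial.algebraMap_fractionRing_ne_zero _ hp
  apply cocycle_sum_eq two_ne_zero
  · exact ne_zero (.X 0) (by norm_num)
  · exact ne_zero (.X 1) (by norm_num)
  · have h := ne_zero (1 - .X 0 ^ 2) (by norm_num)
    simpa only [rfX, map_sub, map_one, map_pow] using h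
  · have h := ne_zero (1 - .X 1 ^ 2 * .X 0 ^ 2) (by norm_num)
    simpa only [rfX, rfS, map_sub, map_one, map_mul, map_pow] using h
  · have h := ne_zero (1 - .X 1 ^ 2 * .X 0) (by norm_num)
    simpa only [rfX, rfS, map_sub, map_one, map_mul, map_pow] using h
end

section
/- Let n ≥ 3 be odd. The formal power series R(x_0, x_2, ..., x_{n-1}) = Π_{m=0}^∞ (1-(x_0 x_2⋯x_{n-1})^(2m+1))^(-1) (1-q(x_0 x_2⋯x_{n-1})^(2m+1))^(-1) Π_{i,j even mod n+1} (1-(x_0 x_2⋯x_{n-1})^(2m)(x_i x_{i+2}⋯x_j)²)^(-1)(1-q(x_0 x_2⋯x_{n-1})^(2m)(x_i x_{i+2}⋯x_j)²)^(-1) satisfies, for each even i, the functional equation R(..., x_{i-2}, x_i, x_{i+2}, ...) = [(1-x_i^(-2))(1-q x_i^(-2)) / ((1-x_i²)(1-q x_i²))] · R(..., x_{i-2} x_i, 1/x_i, x_i x_{i+2}, ...). -/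
/-!
Write `y s` for `x_{2s}` and `P` for the product of all variables. An off-diagonal factor of `R`
belongs to a window `y s ⋯ y (s + L)` of consecutive variables on the cycle, of any length
`L + 1` (winding `m` times around contributes `P ^ (2m)`). The substitution multiplies `y r` by
`g (r + 1) / g r`, where `g t = y t`, `g (t + 1) = (y t)⁻¹` and `g = 1` elsewhere, so a window
product changes by the values of `g` at its two cuts. This is exactly the effect of moving both
cuts by the transposition of `t` and `t + 1`, an involution on windows except for the window
`{t}`, whose factor `(1 - x_i²)(1 - q x_i²)` becomes `(1 - x_i⁻²)(1 - q x_i⁻²)`. Since `P` is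
unchanged, so are the diagonal factors.
-/

/-- The cyclic product `y_s y_{s+1} ⋯ y_t` over the cyclic interval from `s` to `t`
mod `k+2`. Here `y_t` stands for the variable `x_{2t}` of the paper, `n = 2k+3`. -/
noncomputable def segProd (k : ℕ) (y : ZMod (k + 2) → ℂ) (s t : ZMod (k + 2)) : ℂ :=
  ∏ r ∈ Finset.range ((t - s).val + 1), y (s + (r : ℕ))

/-- The reciprocal of the diagonal factors of `R`, indexed by `m`:
`(1 - (x_0 x_2⋯x_{n-1})^{2m+1})(1 - q (x_0 x_2⋯x_{n-1})^{2m+1})`. -/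
noncomputable def diagFac (k : ℕ) (q : ℂ) (y : ZMod (k + 2) → ℂ) (m : ℕ) : ℂ :=
  (1 - (∏ t, y t) ^ (2 * m + 1)) * (1 - q * (∏ t, y t) ^ (2 * m + 1))

/-- The reciprocal of the off-diagonal factors of `R`, indexed by `(m, i, j)` (even `i, j`
of the paper): `(1 - (x_0⋯x_{n-1})^{2m}(x_i x_{i+2}⋯x_j)²)(1 - q (…)(…)²)`. -/
noncomputable def offFac (k : ℕ) (q : ℂ) (y : ZMod (k + 2) → ℂ)
    (p : ℕ × ZMod (k + 2) × ZMod (k + 2)) : ℂ :=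
  (1 - (∏ t, y t) ^ (2 * p.1) * (segProd k y p.2.1 p.2.2) ^ 2) *
    (1 - q * (∏ t, y t) ^ (2 * p.1) * (segProd k y p.2.1 p.2.2) ^ 2)

/-- The substitution `(…, x_{i-2}, x_i, x_{i+2}, …) ↦ (…, x_{i-2} x_i, 1/x_i, x_i x_{i+2}, …)`
on the even-indexed variables, at position `t`. -/
noncomputable def subst18 (k : ℕ) (t : ZMod (k + 2)) (y : ZMod (k + 2) → ℂ) :
    ZMod (k + 2) → ℂ := fun r =>
  if r = t then (y t)⁻¹
  else y r * (if r = t + 1 then y t else 1) * (if r = t - 1 then y t else 1)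

open Finset Function

theorem mul_tprod_eq_mul_tprod_of_eq_comp_perm {β α : Type*} [CommMonoid α] [TopologicalSpace α]
    [T2Space α] [ContinuousMul α] {f g : β → α} (σ : Equiv.Perm β) {a : β} (ha : σ a = a)
    (hfg : ∀ b ≠ a, f b = g (σ b)) (hf : Multipliable f) (hg : Multipliable g) :
    g a * ∏' b, f b = f a * ∏' b, g b := by
  classical
  have hupd : g ∘ σ = update f a (g a) := by
    ext b
    rcases eq_or_ne b a with rfl | hb
    · simp [ha]
    · simp [hb, hfg b hb]
  have hgσ : HasProd (update f a (g a)) (∏' b, g b) := hupd ▸ σ.hasProd_iff.mpr hg.hasProd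
  rw [mul_comm, hf.hasProd.update' a (g a) hgσ, mul_comm]

section Window

variable {R M : Type*} [AddCommMonoidWithOne R] [CommMonoid M]

def windowProd (y : R → M) (s : R) (n : ℕ) : M :=
  ∏ i ∈ range n, y (s + i)

theorem windowProd_succ (y : R → M) (s : R) (n : ℕ) :
    windowProd y s (n + 1) = windowProd y s n * y (s + n) :=
  prod_range_succ _ _

theorem windowProd_succ' (y : R → M) (s : R) (n : ℕ) :
    windowProd y s (n + 1) = y s * windowProd y (s + 1) n := by
  simp only [windowProd, prod_range_succ', Nat.cast_add, Nat.cast_one, Nat.cast_zero, add_zero,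
    mul_comm, add_assoc, add_comm (1 : R)]

theorem windowProd_add (y : R → M) (s : R) (m n : ℕ) :
    windowProd y s (m + n) = windowProd y s m * windowProd y (s + m) n := by
  simp only [windowProd, prod_range_add, Nat.cast_add, add_assoc]

theorem windowProd_mul_eq_of_mul_eq {a b g : R → M} (h : ∀ r, a r * g r = b r * g (r + 1))
    (s : R) (n : ℕ) : windowProd a s n * g s = windowProd b s n * g (s + n) := by
  induction n with
  | zero => simp [windowProd]
  | succ n ih =>
    rw [windowProd_succ, windowProd_succ, mul_right_comm, ih, mul_assoc, mul_comm (g _), h,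
      Nat.cast_succ, ← add_assoc, mul_assoc]

end Window

namespace ZMod

variable {n : ℕ} [NeZero n] {M : Type*} [CommMonoid M]

theorem windowProd_self (y : ZMod n → M) (s : ZMod n) : windowProd y s n = ∏ x, y x := by
  have hbij : Bijective fun i : Fin n => s + (i : ℕ) := by
    refine (Fintype.bijective_iff_injective_and_card _).mpr ⟨fun i j hij => ?_, by simp⟩
    have := congrArg ZMod.val (add_left_cancel hij)
    rwa [ZMod.val_cast_of_lt i.2, ZMod.val_cast_of_lt j.2, Fin.val_inj] at this
  rw [windowProd, ← Fin.prod_univ_eq_prod_range]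
  exact Fintype.prod_bijective _ hbij _ _ fun _ => rfl

theorem windowProd_mul_add (y : ZMod n → M) (s : ZMod n) (m j : ℕ) :
    windowProd y s (m * n + j) = (∏ x, y x) ^ m * windowProd y s j := by
  induction m with
  | zero => simp
  | succ m ih =>
    rw [add_mul, one_mul, add_comm _ n, add_assoc, windowProd_add, ZMod.natCast_self, add_zero,
      ih, windowProd_self, pow_succ', mul_assoc]

/-- The window from `s` of length `m * n + v + 1` winds `m` times around the cycle and then
covers the segment from `s` to `s + v`. -/
def windowEquiv (n : ℕ) [NeZero n] : ℕ × ZMod n × ZMod n ≃ ZMod n × ℕ where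
  toFun p := (p.2.1, p.1 * n + (p.2.2 - p.2.1).val)
  invFun w := (w.2 / n, w.1, w.1 + w.2)
  left_inv := by
    rintro ⟨m, s, e⟩
    have hlt := ZMod.val_lt (e - s)
    simp only [Nat.cast_add, Nat.cast_mul, ZMod.natCast_self, mul_zero, zero_add,
      ZMod.natCast_zmod_val, add_sub_cancel, Prod.mk.injEq, and_true]
    rw [add_comm, Nat.add_mul_div_right _ _ (NeZero.pos n), Nat.div_eq_of_lt hlt, zero_add]
  right_inv := by
    rintro ⟨s, L⟩
    simp [ZMod.val_natCast, Nat.div_add_mod']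

end ZMod

section Reflection

variable {R : Type*} [CommRing R] [DecidableEq R]

/-- `x ↦ x + reflShift t x` is the transposition of `t` and `t + 1`. -/
def reflShift (t x : R) : ℤ := if x = t then 1 else if x = t + 1 then -1 else 0

/-- The window `(s, L)`, covering `s, …, s + L`, is bounded by the cuts `s` and `s + L + 1`;
both cuts are moved by the transposition of `t` and `t + 1`. Only for the window `(t, 0)` would
the cuts cross, so it is kept fixed. -/
def reflectWindow (t : R) (p : R × ℕ) : R × ℕ :=
  if p = (t, 0) then p
  else (p.1 + reflShift t p.1, (p.2 + reflShift t (p.1 + p.2 + 1) - reflShift t p.1).toNat)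

variable {t : R}

theorem reflectWindow_of_ne {s : R} {L : ℕ} (h : (s, L) ≠ (t, 0)) :
    reflectWindow t (s, L) =
      (s + reflShift t s, (L + reflShift t (s + L + 1) - reflShift t s).toNat) :=
  if_neg h

theorem reflShift_le_of_ne {s : R} {L : ℕ} (h : (s, L) ≠ (t, 0)) : reflShift t s ≤ L := by
  unfold reflShift
  split_ifs <;> rcases L with _ | L <;> simp_all <;> omega

section Moves

variable {M : Type*} [CommGroupWithZero M] {y : R → M}

theorem windowProd_reflShift_start (hy : y t ≠ 0) (s : R) {L : ℕ} (h : reflShift t s ≤ L) :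
    windowProd y (s + reflShift t s) ((L - reflShift t s).toNat + 1) * y t ^ reflShift t s =
      windowProd y s (L + 1) := by
  unfold reflShift at h ⊢
  split_ifs at h ⊢ with h1 h2
  · obtain ⟨L, rfl⟩ : ∃ L', L = L' + 1 := ⟨L - 1, by omega⟩
    subst h1
    simp [windowProd_succ' y s (L + 1), mul_comm]
  · subst h2
    rw [show ((L : ℤ) - -1).toNat = L + 1 by omega, Int.cast_neg, Int.cast_one,
      add_neg_cancel_right, windowProd_succ' y t, zpow_neg_one, mul_comm (y t),
      mul_inv_cancel_right₀ hy]
  · simp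

theorem windowProd_reflShift_end (hy : y t ≠ 0) (s : R) {L : ℕ}
    (h : 0 ≤ L + reflShift t (s + L + 1)) :
    windowProd y s ((L + reflShift t (s + L + 1)).toNat + 1) =
      windowProd y s (L + 1) * y t ^ reflShift t (s + L + 1) := by
  unfold reflShift at h ⊢
  split_ifs at h ⊢ with h1 h2
  · rw [show ((L : ℤ) + 1).toNat = L + 1 by omega, windowProd_succ, Nat.cast_succ, ← add_assoc,
      h1, zpow_one]
  · obtain ⟨L, rfl⟩ : ∃ L', L = L' + 1 := ⟨L - 1, by omega⟩
    have hc : s + ((L + 1 : ℕ) : R) = t := by push_cast at h2 ⊢; exact add_right_cancel h2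
    rw [show ((L + 1 : ℕ) + (-1 : ℤ)).toNat = L by omega, windowProd_succ y s (L + 1), hc,
      zpow_neg_one, mul_inv_cancel_right₀ hy]
  · simp

end Moves

variable [Nontrivial R]

theorem reflShift_add_reflShift (x : R) :
    reflShift t (x + reflShift t x) = -reflShift t x := by
  unfold reflShift
  split_ifs <;> simp_all

theorem reflShift_le_add {s : R} {L : ℕ} (h : (s, L) ≠ (t, 0)) :
    reflShift t s ≤ L + reflShift t (s + L + 1) := by
  unfold reflShift
  split_ifs <;> rcases L with _ | _ | L <;> simp_all <;> omega

theorem reflectWindow_ne {s : R} {L : ℕ} (h : (s, L) ≠ (t, 0)) :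
    reflectWindow t (s, L) ≠ (t, 0) := by
  rw [reflectWindow_of_ne h]
  unfold reflShift
  split_ifs <;> rcases L with _ | _ | L <;> simp_all <;> omega

variable (t) in
theorem reflectWindow_involutive : Involutive (reflectWindow t) := by
  rintro ⟨s, L⟩
  by_cases h : (s, L) = (t, 0)
  · simp [reflectWindow, h]
  have hle := reflShift_le_add h
  have hcast : (((L + reflShift t (s + L + 1) - reflShift t s).toNat : ℕ) : R) =
      L + reflShift t (s + L + 1) - reflShift t s := by
    rw [← Int.cast_natCast, Int.toNat_of_nonneg (by omega)]; push_cast; ring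
  have h' := reflectWindow_ne h
  rw [reflectWindow_of_ne h] at h' ⊢
  rw [reflectWindow_of_ne h', hcast, reflShift_add_reflShift,
    show s + reflShift t s + (L + reflShift t (s + L + 1) - reflShift t s) + 1 =
      s + L + 1 + reflShift t (s + L + 1) by ring, reflShift_add_reflShift]
  ext
  · simp
  · simp only; omega

theorem windowProd_reflectWindow {M : Type*} [CommGroupWithZero M] {y : R → M} (hy : y t ≠ 0)
    {s : R} {L : ℕ} (h : (s, L) ≠ (t, 0)) :
    windowProd y (reflectWindow t (s, L)).1 ((reflectWindow t (s, L)).2 + 1) *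
        y t ^ reflShift t s =
      windowProd y s (L + 1) * y t ^ reflShift t (s + L + 1) := by
  have hstart := reflShift_le_of_ne h
  have hend := reflShift_le_add h
  set L₀ := (L - reflShift t s).toNat
  have hc : s + reflShift t s + L₀ + 1 = s + L + 1 := by
    rw [← Int.cast_natCast, Int.toNat_of_nonneg (by omega)]; push_cast; ring
  have hmove := windowProd_reflShift_end hy (s + reflShift t s) (L := L₀) (by rw [hc]; omega)
  rw [hc, show ((L₀ : ℤ) + reflShift t (s + L + 1)).toNat =
    (L + reflShift t (s + L + 1) - reflShift t s).toNat by omega] at hmove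
  rw [reflectWindow_of_ne h, hmove, mul_right_comm, windowProd_reflShift_start hy s hstart]

end Reflection

section Substitution

variable {k : ℕ} {y : ZMod (k + 2) → ℂ} {t : ZMod (k + 2)}

theorem subst18_mul_zpow (hy : y t ≠ 0) (r : ZMod (k + 2)) :
    subst18 k t y r * y t ^ reflShift t r = y r * y t ^ reflShift t (r + 1) := by
  have : Fact (1 < k + 2) := ⟨by omega⟩
  unfold subst18 reflShift
  simp only [eq_sub_iff_add_eq]
  split_ifs <;> simp_all

theorem prod_subst18 (hy : y t ≠ 0) : ∏ r, subst18 k t y r = ∏ r, y r := by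
  have h := windowProd_mul_eq_of_mul_eq (subst18_mul_zpow hy) t (k + 2)
  rw [ZMod.natCast_self, add_zero, ZMod.windowProd_self, ZMod.windowProd_self] at h
  exact mul_right_cancel₀ (zpow_ne_zero _ hy) h

theorem windowProd_subst18 (hy : y t ≠ 0) {s : ZMod (k + 2)} {L : ℕ} (h : (s, L) ≠ (t, 0)) :
    windowProd (subst18 k t y) s (L + 1) =
      windowProd y (reflectWindow t (s, L)).1 ((reflectWindow t (s, L)).2 + 1) := by
  have : Fact (1 < k + 2) := ⟨by omega⟩
  have h' := windowProd_mul_eq_of_mul_eq (subst18_mul_zpow hy) s (L + 1)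
  rw [Nat.cast_succ, ← add_assoc, ← windowProd_reflectWindow hy h] at h'
  exact mul_right_cancel₀ (zpow_ne_zero _ hy) h'

theorem diagFac_subst18 (q : ℂ) (hy : y t ≠ 0) : diagFac k q (subst18 k t y) = diagFac k q y := by
  ext m
  simp only [diagFac, prod_subst18 hy]

end Substitution

noncomputable def windowFac {n : ℕ} (q : ℂ) (y : ZMod n → ℂ) (w : ZMod n × ℕ) : ℂ :=
  (1 - windowProd y w.1 (w.2 + 1) ^ 2) * (1 - q * windowProd y w.1 (w.2 + 1) ^ 2)

theorem offFac_eq_windowFac_comp (k : ℕ) (q : ℂ) (y : ZMod (k + 2) → ℂ) :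
    offFac k q y = windowFac q y ∘ ZMod.windowEquiv (k + 2) := by
  ext ⟨m, s, e⟩
  have hw : windowProd y s (m * (k + 2) + (e - s).val + 1) =
      (∏ x, y x) ^ m * segProd k y s e := by
    rw [add_assoc, ZMod.windowProd_mul_add]; rfl
  simp only [offFac, windowFac, comp_apply, ZMod.windowEquiv, Equiv.coe_fn_mk, hw]
  ring

theorem stmt_18_general (k : ℕ) (q : ℂ) (y : ZMod (k + 2) → ℂ) (hy : ∀ t, y t ≠ 0)
    (t : ZMod (k + 2))
    (h2 : Multipliable (offFac k q y))
    (h4 : Multipliable (offFac k q (subst18 k t y))) :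
    (1 - (y t) ^ 2) * (1 - q * (y t) ^ 2) *
        ((∏' m : ℕ, diagFac k q (subst18 k t y) m) *
          (∏' p : ℕ × ZMod (k + 2) × ZMod (k + 2), offFac k q (subst18 k t y) p))
      = (1 - ((y t)⁻¹) ^ 2) * (1 - q * ((y t)⁻¹) ^ 2) *
          ((∏' m : ℕ, diagFac k q y m) *
            (∏' p : ℕ × ZMod (k + 2) × ZMod (k + 2), offFac k q y p)) := by
  have : Fact (1 < k + 2) := ⟨by omega⟩
  rw [offFac_eq_windowFac_comp, Equiv.multipliable_iff] at h2 h4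
  have key := mul_tprod_eq_mul_tprod_of_eq_comp_perm (reflectWindow_involutive t).toPerm
    (a := (t, 0)) (by simp [reflectWindow])
    (fun w hw => by simp [windowFac, windowProd_subst18 (hy t) hw]) h4 h2
  simp only [offFac_eq_windowFac_comp, comp_apply, Equiv.tprod_eq, diagFac_subst18 q (hy t)]
  have hfac : windowFac q y (t, 0) = (1 - y t ^ 2) * (1 - q * y t ^ 2) := by
    simp [windowFac, windowProd]
  have hfac' : windowFac q (subst18 k t y) (t, 0) =
      (1 - (y t)⁻¹ ^ 2) * (1 - q * (y t)⁻¹ ^ 2) := by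
    simp [windowFac, windowProd, subst18]
  rw [hfac, hfac'] at key
  linear_combination (∏' m, diagFac k q y m) * key

/-- The residue `R = Π diagFac⁻¹ · Π offFac⁻¹` (for `n = 2k+3 ≥ 3` odd) satisfies the
functional equation `R(…, x_{i-2}, x_i, x_{i+2}, …) =
[(1-x_i^{-2})(1-q x_i^{-2})/((1-x_i²)(1-q x_i²))] · R(…, x_{i-2}x_i, 1/x_i, x_i x_{i+2}, …)`,
stated with denominators cleared. -/
theorem stmt_18 (k : ℕ) (q : ℂ) (y : ZMod (k + 2) → ℂ) (hy : ∀ t, y t ≠ 0)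
    (t : ZMod (k + 2))
    (h1 : Multipliable (diagFac k q y)) (h2 : Multipliable (offFac k q y))
    (h3 : Multipliable (diagFac k q (subst18 k t y)))
    (h4 : Multipliable (offFac k q (subst18 k t y))) :
    (1 - (y t) ^ 2) * (1 - q * (y t) ^ 2) *
        ((∏' m : ℕ, diagFac k q (subst18 k t y) m) *
          (∏' p : ℕ × ZMod (k + 2) × ZMod (k + 2), offFac k q (subst18 k t y) p))
      = (1 - ((y t)⁻¹) ^ 2) * (1 - q * ((y t)⁻¹) ^ 2) *
          ((∏' m : ℕ, diagFac k q y m) *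
            (∏' p : ℕ × ZMod (k + 2) × ZMod (k + 2), offFac k q y p)) :=
  stmt_18_general k q y hy t h2 h4
end

section
/- Let n ≥ 1 and consider (n)-tuples of partitions (δ_1, ..., δ_n), each δ_i = (δ_i^(1) ≥ δ_i^(2) ≥ ... ≥ 0) with finite support. The generating function weighted by Π_k x_k^(a_k) where a_k = Σ_{i+j ≡ k mod n} δ_i^(j) equals Π_{m=0}^∞ Π_{i,j mod n} (1 - (x_i x_{i+1} ⋯ x_j)(x_1 x_2 ⋯ x_n)^m)^(-1), as formal power series in x_1,...,x_n. -/
/-!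
Every factor `(1 - x^e)⁻¹` is the geometric series `∑_k x^{k e}`, so the coefficient of `x^a`
counts multiplicity vectors `c` with `∑ c(m,i,j) · e(m,i,j) = a`. Putting `t = m n + (j - i)`,
the monomial `(x_i ⋯ x_j)(x_1 ⋯ x_n)^m` is the run `x_i x_{i+1} ⋯ x_{i+t}` of `t + 1`
cyclically consecutive variables. A tuple of partitions corresponds to the multiplicities
`d(i, t)` of its columns: a column of height `t + 1` in `δ_i` occupies the parts
`δ_i^(1), …, δ_i^(t+1)` and so contributes the run `x_{i+1} ⋯ x_{i+t+1}`; conversely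
`d(i, t) = δ_i^(t+1) - δ_i^(t+2)`.
A nonzero part `δ_i^(u)` forces `|a| ≥ u`, so only columns of height at most `|a|` occur,
and these are all accounted for by the factors with `m ≤ |a|`.
-/

/-- Truncation (sufficient for the coefficient at `a`) of the infinite product
`Π_{m=0}^∞ Π_{i,j mod n} (1 - (x_i x_{i+1}⋯x_j)(x_1 x_2⋯x_n)^m)^{-1}`, with variables
indexed by `ZMod n` and cyclic interval products. -/
noncomputable def tupleGF (n : ℕ) [NeZero n] (M : ℕ) : MvPowerSeries (ZMod n) ℚ :=
  ∏ m ∈ Finset.range (M + 1), ∏ i : ZMod n, ∏ j : ZMod n,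
    ((1 : MvPowerSeries (ZMod n) ℚ) -
      MvPowerSeries.monomial
        (Finsupp.equivFunOnFinite.symm fun k : ZMod n =>
          m + if (k - i).val ≤ (j - i).val then 1 else 0)
        1)⁻¹

open Finset MvPowerSeries

namespace Finsupp

variable {σ : Type*}

theorem exists_nsmul_eq_iff {e b : σ →₀ ℕ} (hb : b ≠ 0) :
    (∃ k : ℕ, b = k • e) ↔ e ≤ b ∧ ∃ k : ℕ, b - e = k • e := by
  constructor
  · rintro ⟨_ | k, rfl⟩
    · exact absurd (zero_smul ℕ e) hb
    · rw [succ_nsmul]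
      exact ⟨le_add_self, k, add_tsub_cancel_right _ _⟩
  · rintro ⟨hle, k, hk⟩
    exact ⟨k + 1, by rw [succ_nsmul, ← hk, tsub_add_cancel_of_le hle]⟩

theorem nsmul_left_injective {e : σ →₀ ℕ} (he : e ≠ 0) :
    Function.Injective fun c : ℕ => c • e := by
  obtain ⟨p, hp⟩ := Finsupp.ne_iff.mp he
  intro c c' h
  exact (by simpa using DFunLike.congr_fun h p : c = c' ∨ e p = 0).resolve_right hp

end Finsupp

namespace MvPowerSeries

variable {σ R : Type*}

open scoped Classical in
noncomputable def geomSeries [Semiring R] (e : σ →₀ ℕ) : MvPowerSeries σ R :=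
  fun b => if ∃ k : ℕ, b = k • e then 1 else 0

open scoped Classical in
theorem coeff_geomSeries [Semiring R] (e b : σ →₀ ℕ) :
    coeff b (geomSeries (R := R) e) = if ∃ k : ℕ, b = k • e then 1 else 0 :=
  rfl

theorem geomSeries_mul_one_sub_monomial [Ring R] {e : σ →₀ ℕ} (he : e ≠ 0) :
    geomSeries e * (1 - monomial e (1 : R)) = 1 := by
  classical
  ext b
  rw [mul_sub, mul_one, map_sub, coeff_mul_monomial, coeff_one, mul_one,
    coeff_geomSeries, coeff_geomSeries]
  by_cases hb : b = 0
  · subst hb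
    have h0 : ∃ k : ℕ, (0 : σ →₀ ℕ) = k • e := ⟨0, (zero_smul ℕ e).symm⟩
    simp [he, h0]
  · rw [Finsupp.exists_nsmul_eq_iff hb, if_neg hb]
    by_cases hle : e ≤ b <;> simp [hle]

theorem inv_one_sub_monomial [DecidableEq σ] {K : Type*} [Field K] {e : σ →₀ ℕ}
    (he : e ≠ 0) : (1 - monomial e (1 : K))⁻¹ = geomSeries e := by
  refine (MvPowerSeries.inv_eq_iff_mul_eq_one ?_).mpr (geomSeries_mul_one_sub_monomial he)
  rw [map_sub, constantCoeff_one, ← coeff_zero_eq_constantCoeff_apply, coeff_monomial,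
    if_neg he.symm]
  simp


theorem coeff_prod_geomSeries [CommSemiring R] {ι : Type*}
    (s : Finset ι) {e : ι → σ →₀ ℕ} (he : ∀ i ∈ s, e i ≠ 0) (a : σ →₀ ℕ) :
    coeff a (∏ i ∈ s, geomSeries (R := R) (e i)) =
      Nat.card {c : ι → ℕ // (∀ i ∉ s, c i = 0) ∧ ∑ i ∈ s, c i • e i = a} := by
  classical
  simp only [coeff_prod, coeff_geomSeries, prod_boole, sum_boole]
  rw [← Nat.card_eq_finsetCard]
  congr 1
  symm
  refine Nat.card_eq_of_bijective
    (fun c => ⟨Finsupp.indicator s (fun i _ => c.1 i • e i), ?_⟩) ⟨?_, ?_⟩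
  · rw [mem_filter, mem_finsuppAntidiag]
    refine ⟨⟨?_, Finsupp.support_indicator_subset _ _⟩, fun i hi => ⟨c.1 i, ?_⟩⟩
    · exact (sum_congr rfl fun i hi =>
        Finsupp.indicator_of_mem hi fun i _ => c.1 i • e i).trans c.2.2
    · exact Finsupp.indicator_of_mem hi _
  · rintro ⟨c, hc⟩ ⟨c', hc'⟩ h
    ext i
    by_cases hi : i ∈ s
    · have := DFunLike.congr_fun (congrArg Subtype.val h) i
      simp only [Finsupp.indicator_of_mem hi] at this
      exact Finsupp.nsmul_left_injective (he i hi) this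
    · exact (hc.1 i hi).trans (hc'.1 i hi).symm
  · rintro ⟨l, hl⟩
    rw [mem_filter, mem_finsuppAntidiag] at hl
    obtain ⟨⟨hsum, hsupp⟩, hmult⟩ := hl
    choose! k hk using hmult
    refine ⟨⟨fun i => if i ∈ s then k i else 0, fun i hi => if_neg hi, ?_⟩, ?_⟩
    · rw [← hsum]
      exact sum_congr rfl fun i hi => by simp only [if_pos hi, hk i hi]
    · ext i p
      by_cases hi : i ∈ s
      · simp [Finsupp.indicator_of_mem hi, hi, hk i hi]
      · simp [Finsupp.indicator_of_notMem hi,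
          Finsupp.notMem_support_iff.mp fun h => hi (hsupp h)]

end MvPowerSeries

section CyclicInterval

variable {n : ℕ}

-- A column of height `t + 1` in the `i`-th partition contributes `x_{i+1} ⋯ x_{i+t+1}`.
noncomputable def cyclicInterval (i : ZMod n) (t : ℕ) : ZMod n →₀ ℕ :=
  ∑ u ∈ range (t + 1), Finsupp.single (i + (u + 1 : ℕ)) 1

theorem cyclicInterval_apply (i : ZMod n) (t : ℕ) (k : ZMod n) :
    cyclicInterval i t k =
      ∑ u ∈ range (t + 1), if i + ((u + 1 : ℕ) : ZMod n) = k then 1 else 0 := by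
  simp [cyclicInterval, Finsupp.finsetSum_apply, Finsupp.single_apply]

theorem cyclicInterval_ne_zero (i : ZMod n) (t : ℕ) : cyclicInterval i t ≠ 0 := by
  intro h
  have := DFunLike.congr_fun h (i + (1 : ℕ))
  rw [cyclicInterval_apply, sum_range_succ'] at this
  simp at this

variable [NeZero n]

theorem ZMod.natCast_eq_iff_eq_val_of_lt {u : ℕ} (hu : u < n) (x : ZMod n) :
    (u : ZMod n) = x ↔ u = x.val :=
  ⟨fun h => h ▸ (ZMod.val_cast_of_lt hu).symm, fun h => h ▸ ZMod.natCast_zmod_val x⟩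

theorem sum_range_mul_add_natCast_eq (x : ZMod n) {r : ℕ} (hr : r < n) (m : ℕ) :
    ∑ u ∈ range (m * n + r + 1), (if (u : ZMod n) = x then 1 else 0) =
      m + if x.val ≤ r then 1 else 0 := by
  have hcount : ∀ b ≤ n, ∑ u ∈ range b, (if (u : ZMod n) = x then 1 else 0) =
      if x.val < b then 1 else 0 := fun b hb => by
    rw [sum_congr rfl fun u hu => if_congr
      (ZMod.natCast_eq_iff_eq_val_of_lt ((mem_range.mp hu).trans_le hb) x) rfl rfl, sum_ite_eq']
    simp only [mem_range]
  induction m with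
  | zero => simpa [Nat.lt_succ_iff] using hcount (r + 1) hr
  | succ m ih =>
    rw [show (m + 1) * n + r + 1 = n + (m * n + r + 1) by ring, sum_range_add, hcount n le_rfl,
      if_pos (ZMod.val_lt x)]
    simp only [Nat.cast_add, ZMod.natCast_self, zero_add, ih]
    ring

theorem cyclicInterval_sub_one_mul_add (m : ℕ) (i j : ZMod n) :
    cyclicInterval (i - 1) (m * n + (j - i).val) = Finsupp.equivFunOnFinite.symm fun k =>
      m + if (k - i).val ≤ (j - i).val then 1 else 0 := by
  ext k
  rw [Finsupp.coe_equivFunOnFinite_symm, cyclicInterval_apply,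
    ← sum_range_mul_add_natCast_eq _ (ZMod.val_lt (j - i))]
  refine sum_congr rfl fun u _ => if_congr ?_ rfl rfl
  rw [eq_sub_iff_add_eq, add_comm]
  push_cast
  ring_nf

theorem tupleGF_eq_prod_geomSeries (M : ℕ) :
    tupleGF n M = ∏ p ∈ univ ×ˢ range (n * (M + 1)), geomSeries (cyclicInterval p.1 p.2) := by
  have hfactor : ∀ m i j, (1 - monomial (Finsupp.equivFunOnFinite.symm fun k : ZMod n =>
      m + if (k - i).val ≤ (j - i).val then 1 else 0) (1 : ℚ))⁻¹ =
      geomSeries (cyclicInterval (i - 1) (m * n + (j - i).val)) := fun m i j => by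
    rw [← cyclicInterval_sub_one_mul_add, inv_one_sub_monomial (cyclicInterval_ne_zero _ _)]
  simp only [tupleGF, hfactor, ← prod_product']
  refine prod_nbij' (fun x => (x.2.1 - 1, x.1 * n + (x.2.2 - x.2.1).val))
    (fun p => (p.2 / n, p.1 + 1, p.1 + 1 + (p.2 : ZMod n))) ?_ ?_ ?_ ?_ fun _ _ => rfl
  · rintro ⟨m, i, j⟩ h
    have hv := ZMod.val_lt (j - i)
    simp only [mem_product, mem_range, mem_univ, true_and] at h ⊢
    nlinarith
  · rintro ⟨i, t⟩ h
    simp only [mem_product, mem_range, mem_univ, true_and] at h ⊢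
    exact ⟨Nat.div_lt_of_lt_mul h, trivial⟩
  · rintro ⟨m, i, j⟩ -
    have hv := ZMod.val_lt (j - i)
    simp only [sub_add_cancel, Prod.mk.injEq, true_and]
    constructor
    · rw [Nat.add_comm, Nat.add_mul_div_right _ _ (NeZero.pos n), Nat.div_eq_of_lt hv, zero_add]
    · push_cast
      simp
  · rintro ⟨i, t⟩ -
    simp [ZMod.val_natCast, Nat.div_add_mod']

end CyclicInterval

section TailSum

def tailSum (N : ℕ) (g : ℕ → ℕ) (u : ℕ) : ℕ :=
  ∑ t ∈ Ico u N, g t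

variable {N : ℕ}

theorem antitone_tailSum (g : ℕ → ℕ) : Antitone (tailSum N g) := fun _ _ huv =>
  sum_le_sum_of_subset (Ico_subset_Ico_left huv)

theorem tailSum_of_le (g : ℕ → ℕ) {u : ℕ} (hu : N ≤ u) : tailSum N g u = 0 := by
  rw [tailSum, Ico_eq_empty_of_le hu, sum_empty]

theorem tailSum_sub_tailSum_succ {g : ℕ → ℕ} (hg : ∀ t, N ≤ t → g t = 0) (u : ℕ) :
    tailSum N g u - tailSum N g (u + 1) = g u := by
  rcases lt_or_ge u N with hu | hu
  · rw [tailSum, sum_eq_sum_Ico_succ_bot hu, ← tailSum, add_tsub_cancel_right]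
  · rw [tailSum_of_le g hu, hg u hu, zero_tsub]

theorem tailSum_sub_succ {f : ℕ → ℕ} (hf : Antitone f) (N u : ℕ) :
    tailSum N (fun t => f t - f (t + 1)) u = f u - f N := by
  induction N with
  | zero => rw [tailSum_of_le _ u.zero_le, tsub_eq_zero_of_le (hf u.zero_le)]
  | succ N ih =>
    rcases le_or_gt u N with hu | hu
    · have h₁ := hf hu
      have h₂ : f (N + 1) ≤ f N := hf N.le_succ
      rw [tailSum, sum_Ico_succ_top hu, ← tailSum, ih]
      omega
    · rw [tailSum_of_le _ hu, tsub_eq_zero_of_le (hf hu)]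

end TailSum

section PartitionTuples

variable {n : ℕ} [NeZero n]

-- `δ i u` is the part `δ_i^(u+1)`; it contributes to the exponent of `x_{i+u+1}`.
noncomputable def tupleWeight (δ : ZMod n → ℕ → ℕ) (k : ZMod n) : ℕ :=
  ∑ᶠ p ∈ {p : ZMod n × ℕ | p.1 + ((p.2 + 1 : ℕ) : ZMod n) = k}, δ p.1 p.2

theorem tupleWeight_eq_sum {δ : ZMod n → ℕ → ℕ} {N : ℕ} (hδ : ∀ i u, N ≤ u → δ i u = 0)
    (k : ZMod n) :
    tupleWeight δ k =
      ∑ i, ∑ u ∈ range N, if i + ((u + 1 : ℕ) : ZMod n) = k then δ i u else 0 := by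
  classical
  rw [tupleWeight, finsum_mem_eq_sum_of_inter_support_eq (fun p : ZMod n × ℕ => δ p.1 p.2)
    (t := {p ∈ univ ×ˢ range N | p.1 + ((p.2 + 1 : ℕ) : ZMod n) = k}), sum_filter, sum_product]
  ext ⟨i, u⟩
  simp only [Set.mem_inter_iff, Set.mem_ofPred_eq, Function.mem_support, coe_filter,
    mem_product, mem_univ, mem_range, true_and]
  exact ⟨fun h => ⟨⟨lt_of_not_ge fun hu => h.2 (hδ i u hu), h.1⟩, h.2⟩,
    fun h => ⟨h.1.2, h.2⟩⟩

theorem tupleWeight_tailSum (N : ℕ) (d : ZMod n × ℕ → ℕ) :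
    tupleWeight (fun i => tailSum N fun t => d (i, t)) =
      ⇑(∑ p ∈ univ ×ˢ range N, d p • cyclicInterval p.1 p.2) := by
  funext k
  rw [tupleWeight_eq_sum fun i u hu => tailSum_of_le _ hu, Finsupp.finsetSum_apply, sum_product]
  refine sum_congr rfl fun i _ => ?_
  simp only [tailSum, ite_sum_zero, Finsupp.smul_apply, smul_eq_mul, cyclicInterval_apply,
    mul_sum, mul_boole, range_eq_Ico]
  exact sum_Ico_Ico_comm 0 N _

theorem exists_forall_le_eq_zero_of_finite_support {ι : Type*} [Finite ι] {δ : ι → ℕ → ℕ}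
    (hF : ∀ i, (Function.support (δ i)).Finite) : ∃ N, ∀ i u, N ≤ u → δ i u = 0 := by
  choose B hB using fun i => (hF i).bddAbove
  obtain ⟨N, hN⟩ := Finite.bddAbove_range B
  refine ⟨N + 1, fun i u hu => ?_⟩
  by_contra h
  have := (hB i h).trans (hN ⟨i, rfl⟩)
  omega

def IsPartitionTupleOfWeight (a : ZMod n →₀ ℕ) (δ : ZMod n → ℕ → ℕ) : Prop :=
  (∀ i, Antitone (δ i)) ∧ (∀ i, (Function.support (δ i)).Finite) ∧ ∀ k, tupleWeight δ k = a k

theorem IsPartitionTupleOfWeight.eq_zero_of_degree_le {a : ZMod n →₀ ℕ} {δ : ZMod n → ℕ → ℕ}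
    (hδ : IsPartitionTupleOfWeight a δ) {i : ZMod n} {u : ℕ} (hu : a.degree ≤ u) :
    δ i u = 0 := by
  obtain ⟨hA, hF, hw⟩ := hδ
  obtain ⟨N, hN⟩ := exists_forall_le_eq_zero_of_finite_support hF
  have htotal : a.degree = ∑ j, ∑ u ∈ range N, δ j u := by
    simp only [Finsupp.degree_eq_sum, ← hw, tupleWeight_eq_sum hN]
    rw [sum_comm]
    refine sum_congr rfl fun j _ => ?_
    rw [sum_comm]
    exact sum_congr rfl fun u _ => Fintype.sum_ite_eq _ _
  by_contra h
  have hpos : ∀ v ≤ u, 1 ≤ δ i v := fun v hv => (Nat.one_le_iff_ne_zero.mpr h).trans (hA i hv)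
  have huN : u < N := lt_of_not_ge fun h' => h (hN i u h')
  have : u + 1 ≤ a.degree := calc
    u + 1 = ∑ _ ∈ range (u + 1), 1 := by simp
    _ ≤ ∑ v ∈ range (u + 1), δ i v :=
        sum_le_sum fun v hv => hpos v (Nat.lt_succ_iff.mp (mem_range.mp hv))
    _ ≤ ∑ v ∈ range N, δ i v := sum_le_sum_of_subset (range_subset_range.mpr huN)
    _ ≤ ∑ j, ∑ v ∈ range N, δ j v :=
        single_le_sum (f := fun j => ∑ v ∈ range N, δ j v) (fun _ _ => Nat.zero_le _) (mem_univ i)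
    _ = a.degree := htotal.symm
  omega

def intervalMultiplicitiesEquiv {N : ℕ} (a : ZMod n →₀ ℕ) (hN : a.degree ≤ N) :
    {d : ZMod n × ℕ → ℕ // (∀ p ∉ univ ×ˢ range N, d p = 0) ∧
        ∑ p ∈ univ ×ˢ range N, d p • cyclicInterval p.1 p.2 = a} ≃
    {δ : ZMod n → ℕ → ℕ // IsPartitionTupleOfWeight a δ} where
  toFun d := ⟨fun i => tailSum N fun t => d.1 (i, t), fun _ => antitone_tailSum _,
    fun _ => (Set.finite_Iio N).subset fun _ hu => lt_of_not_ge fun h => hu (tailSum_of_le _ h),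
    fun k => by rw [tupleWeight_tailSum, d.2.2]⟩
  invFun δ := ⟨fun p => δ.1 p.1 p.2 - δ.1 p.1 (p.2 + 1), fun p hp => by
      have hNp : N ≤ p.2 := by simpa using hp
      simp only [δ.2.eq_zero_of_degree_le (hN.trans hNp), zero_tsub], by
      ext k
      rw [← tupleWeight_tailSum, ← δ.2.2.2 k]
      congr 1
      funext i u
      rw [tailSum_sub_succ (δ.2.1 i), δ.2.eq_zero_of_degree_le hN, tsub_zero]⟩
  left_inv d := Subtype.ext <| funext fun p =>
    tailSum_sub_tailSum_succ (fun t ht => d.2.1 _ (by simp [ht])) p.2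
  right_inv δ := Subtype.ext <| funext fun i => funext fun u => by
    simp only [tailSum_sub_succ (δ.2.1 i), δ.2.eq_zero_of_degree_le hN, tsub_zero]

end PartitionTuples

theorem stmt_19_general (n : ℕ) [NeZero n] (a : ZMod n →₀ ℕ) :
    MvPowerSeries.coeff a (tupleGF n (a.sum fun _ v => v))
      = (Nat.card {δ : ZMod n → ℕ → ℕ //
          (∀ i, Antitone (δ i)) ∧ (∀ i, (Function.support (δ i)).Finite) ∧
          ∀ k : ZMod n,
            (∑ᶠ p ∈ {p : ZMod n × ℕ | p.1 + ((p.2 + 1 : ℕ) : ZMod n) = k}, δ p.1 p.2)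
              = a k} : ℚ) := by
  have hN : a.degree ≤ n * (a.degree + 1) :=
    (Nat.le_mul_of_pos_left _ (NeZero.pos n)).trans' a.degree.le_succ
  rw [tupleGF_eq_prod_geomSeries,
    coeff_prod_geomSeries _ fun p _ => cyclicInterval_ne_zero p.1 p.2]
  exact congrArg Nat.cast (Nat.card_congr (intervalMultiplicitiesEquiv a hN))

/-- The generating function of `n`-tuples of partitions `(δ_1, …, δ_n)` weighted by
`Π_k x_k^{a_k}` with `a_k = Σ_{i+j ≡ k mod n} δ_i^{(j)}` (superscripts `j ≥ 1`) equals
`Π_{m=0}^∞ Π_{i,j mod n} (1 - (x_i x_{i+1}⋯x_j)(x_1⋯x_n)^m)^{-1}`, coefficientwise: the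
coefficient at `a` of a sufficiently deep truncation counts such tuples. Here
`δ i j'` encodes the part `δ_i^{(j'+1)}` of the paper. -/
theorem stmt_19 (n : ℕ) [NeZero n] (hn : 1 ≤ n) (a : ZMod n →₀ ℕ) :
    MvPowerSeries.coeff a (tupleGF n (a.sum fun _ v => v))
      = (Nat.card {δ : ZMod n → ℕ → ℕ //
          (∀ i, Antitone (δ i)) ∧ (∀ i, (Function.support (δ i)).Finite) ∧
          ∀ k : ZMod n,
            (∑ᶠ p ∈ {p : ZMod n × ℕ | p.1 + ((p.2 + 1 : ℕ) : ZMod n) = k}, δ p.1 p.2)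
              = a k} : ℚ) :=
  stmt_19_general n a
end
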